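/- Let n ≥ 1 and u, v ∈ S_n. If ℓ(uv) = ℓ(u) + ℓ(v), then ∂_u ∘ ∂_v = ∂_{uv} as operators on ℚ[x_1,…,x_n]; if ℓ(uv) < ℓ(u) + ℓ(v), then ∂_u ∘ ∂_v = 0. -/

import Mathlib

open MvPolynomial
open scoped Classical

/-- The Coxeter length of a permutation of `Fin n`, i.e. its number of inversions. -/
def permLen {n : ℕ} (w : Equiv.Perm (Fin n)) : ℕ :=
  (Finset.univ.filter (fun p : Fin n × Fin n => p.1 < p.2 ∧ w p.2 < w p.1)).card

/-- The adjacent transposition `s_i` exchanging the `i`-th and `(i+1)`-th letters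
(zero-indexed); junk value `1` if out of range. -/
def adjSwap (n : ℕ) (i : ℕ) : Equiv.Perm (Fin n) :=
  if h : i + 1 < n then Equiv.swap ⟨i, Nat.lt_of_succ_lt h⟩ ⟨i + 1, h⟩ else 1

/-- The longest element `w₀` of the symmetric group on `Fin n`, `i ↦ n - 1 - i`
(one-indexed: `i ↦ n + 1 - i`). -/
def w0 (n : ℕ) : Equiv.Perm (Fin n) := Fin.revPerm

/-- The Demazure (divided difference) operator with respect to a pair of variables `i j`:
`f ↦ (f - swap(i,j)·f) / (Xᵢ - Xⱼ)`.  The difference is always divisible by `Xᵢ - Xⱼ`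
(for `i ≠ j`), and the quotient is unique since the polynomial ring is a domain, so the
definition by choice below produces exactly this quotient. -/
noncomputable def demazure {σ : Type} [DecidableEq σ] (i j : σ)
    (f : MvPolynomial σ ℚ) : MvPolynomial σ ℚ :=
  if h : ∃ g, f - rename (Equiv.swap i j) f = (X i - X j) * g then h.choose else 0

/-- The Demazure operator `∂ᵢ` on `ℚ[x₀, …, x_{n-1}]` (zero-indexed). -/
noncomputable def demAt (n : ℕ) (i : ℕ) :
    MvPolynomial (Fin n) ℚ → MvPolynomial (Fin n) ℚ :=
  if h : i + 1 < n then demazure ⟨i, Nat.lt_of_succ_lt h⟩ ⟨i + 1, h⟩ else fun _ => 0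

/-- The composite Demazure operator `∂_{i₁} ∘ ⋯ ∘ ∂_{i_r}` along a word `l = [i₁, …, i_r]`. -/
noncomputable def demWord (n : ℕ) (l : List ℕ) :
    MvPolynomial (Fin n) ℚ → MvPolynomial (Fin n) ℚ :=
  l.foldr (fun i op => demAt n i ∘ op) id

/-- `l = [i₁, …, i_r]` is a reduced word for `w` if all letters are in range,
`s_{i₁} ⋯ s_{i_r} = w`, and `r = ℓ(w)` is the number of inversions of `w`. -/
def IsReducedWord (n : ℕ) (w : Equiv.Perm (Fin n)) (l : List ℕ) : Prop :=
  (∀ i ∈ l, i + 1 < n) ∧ (l.map (adjSwap n)).prod = w ∧ l.length = permLen w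

/-- The Demazure operator `∂_w`, defined along a chosen reduced word of `w`
(the result is independent of this choice). -/
noncomputable def demazureOf (n : ℕ) (w : Equiv.Perm (Fin n)) :
    MvPolynomial (Fin n) ℚ → MvPolynomial (Fin n) ℚ :=
  if h : ∃ l, IsReducedWord n w l then demWord n h.choose else fun _ => 0

/-- The Demazure operator `∂ᵢˣ` acting on the `x`-variables (the left summand) of
`ℚ[x₁, …, xₙ, t₁, …, tₙ]`. -/
noncomputable def demAtX (n : ℕ) (i : ℕ) :
    MvPolynomial (Fin n ⊕ Fin n) ℚ → MvPolynomial (Fin n ⊕ Fin n) ℚ :=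
  if h : i + 1 < n then
    demazure (Sum.inl ⟨i, Nat.lt_of_succ_lt h⟩) (Sum.inl ⟨i + 1, h⟩) else fun _ => 0

/-- Composite of `x`-variable Demazure operators along a word. -/
noncomputable def demWordX (n : ℕ) (l : List ℕ) :
    MvPolynomial (Fin n ⊕ Fin n) ℚ → MvPolynomial (Fin n ⊕ Fin n) ℚ :=
  l.foldr (fun i op => demAtX n i ∘ op) id

/-- The Demazure operator `∂_wˣ` in the `x`-variables, along a chosen reduced word of `w`. -/
noncomputable def demazureOfX (n : ℕ) (w : Equiv.Perm (Fin n)) :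
    MvPolynomial (Fin n ⊕ Fin n) ℚ → MvPolynomial (Fin n ⊕ Fin n) ℚ :=
  if h : ∃ l, IsReducedWord n w l then demWordX n h.choose else fun _ => 0

/-- The top product `∏_{i + j ≤ n} (xᵢ - tⱼ)` (one-indexed), i.e. the double Schubert
polynomial of the longest element. -/
noncomputable def schubProd (n : ℕ) : MvPolynomial (Fin n ⊕ Fin n) ℚ :=
  ∏ p ∈ Finset.univ.filter (fun p : Fin n × Fin n => (p.1 : ℕ) + (p.2 : ℕ) + 2 ≤ n),
    (X (Sum.inl p.1) - X (Sum.inr p.2))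

/-- The double Schubert polynomial `𝔖_w(x, t) = ∂ˣ_{w⁻¹w₀} (∏_{i+j≤n} (xᵢ - tⱼ))`. -/
noncomputable def schubert (n : ℕ) (w : Equiv.Perm (Fin n)) :
    MvPolynomial (Fin n ⊕ Fin n) ℚ :=
  demazureOfX n (w⁻¹ * w0 n) (schubProd n)

/-! The divided differences `∂ᵢ` square to zero and satisfy the braid relations; each relation
is checked by multiplying through by the relevant product of differences `xₐ - x_b`, which
turns both sides into the same signed sum of permuted copies of `f`. Matsumoto's theorem for
`Sₙ`, proved by induction on length from the description `ℓ(sᵢw) < ℓ(w) ↔ w⁻¹(i+1) < w⁻¹(i)`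
of left descents, then makes the composite along a reduced word depend only on the
permutation. Concatenating reduced words of `u` and `v` gives a word for `uv` of length
`ℓ(u) + ℓ(v)`: if this is `ℓ(uv)` the word is reduced; otherwise some suffix `i :: m` of it has
`m` reduced and `sᵢ` a left descent of the product of `m`, so that suffix acts as
`∂ᵢ ∘ ∂ᵢ ∘ ⋯ = 0`. -/

namespace MvPolynomial

variable {σ : Type}

lemma rename_perm_mul (π τ : Equiv.Perm σ) (f : MvPolynomial σ ℚ) :
    rename ⇑(π * τ) f = rename π (rename τ f) := by
  rw [Equiv.Perm.coe_mul, rename_rename]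

lemma X_sub_X_ne_zero {i j : σ} (h : i ≠ j) : (X i - X j : MvPolynomial σ ℚ) ≠ 0 :=
  sub_ne_zero.2 (X_injective.ne h)

lemma rename_swap_rename_swap [DecidableEq σ] (i j : σ) (f : MvPolynomial σ ℚ) :
    rename (Equiv.swap i j) (rename (Equiv.swap i j) f) = f := by
  rw [← rename_perm_mul, Equiv.swap_mul_self, Equiv.Perm.coe_one, rename_id_apply]

lemma X_sub_X_dvd_sub_rename_swap [DecidableEq σ] (i j : σ) (f : MvPolynomial σ ℚ) :
    (X i - X j : MvPolynomial σ ℚ) ∣ f - rename (Equiv.swap i j) f := by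
  induction f using MvPolynomial.induction_on with
  | C a => simp
  | add p q hp hq => simpa only [map_add, add_sub_add_comm] using dvd_add hp hq
  | mul_X p k hp =>
    have hX : (X i - X j : MvPolynomial σ ℚ) ∣ X k - X (Equiv.swap i j k) := by
      rcases eq_or_ne k i with rfl | hki
      · simp
      rcases eq_or_ne k j with rfl | hkj
      · simpa using (dvd_sub_comm (a := (X i - X k : MvPolynomial σ ℚ))).1 dvd_rfl
      · simp [Equiv.swap_apply_of_ne_of_ne hki hkj]
    rw [map_mul, rename_X, show ∀ a b c d : MvPolynomial σ ℚ,
      a * b - c * d = (a - c) * b + c * (b - d) by intros; ring]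
    exact dvd_add (hp.mul_right _) (hX.mul_left _)

end MvPolynomial

section Demazure

variable {σ : Type} [DecidableEq σ]

lemma X_sub_X_mul_demazure (i j : σ) (f : MvPolynomial σ ℚ) :
    (X i - X j) * demazure i j f = f - rename (Equiv.swap i j) f := by
  obtain h : ∃ g, f - rename (Equiv.swap i j) f = (X i - X j) * g :=
    X_sub_X_dvd_sub_rename_swap i j f
  rw [demazure, dif_pos h]
  exact h.choose_spec.symm

variable {i j : σ}

lemma demazure_eq_of_mul_eq (h : i ≠ j) {f g : MvPolynomial σ ℚ}
    (hg : (X i - X j) * g = f - rename (Equiv.swap i j) f) : demazure i j f = g :=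
  mul_left_cancel₀ (X_sub_X_ne_zero h) (by rw [X_sub_X_mul_demazure, hg])

lemma demazure_antisymm (h : i ≠ j) (f : MvPolynomial σ ℚ) :
    demazure j i f = -demazure i j f :=
  demazure_eq_of_mul_eq h.symm (by
    rw [Equiv.swap_comm, ← X_sub_X_mul_demazure]; ring)

lemma demazure_eq_zero_of_rename_swap_eq (h : i ≠ j) {f : MvPolynomial σ ℚ}
    (hf : rename (Equiv.swap i j) f = f) : demazure i j f = 0 :=
  demazure_eq_of_mul_eq h (by rw [hf]; ring)

lemma demazure_zero (h : i ≠ j) : demazure i j (0 : MvPolynomial σ ℚ) = 0 :=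
  demazure_eq_zero_of_rename_swap_eq h (map_zero _)

lemma rename_swap_demazure (h : i ≠ j) (f : MvPolynomial σ ℚ) :
    rename (Equiv.swap i j) (demazure i j f) = demazure i j f := by
  refine mul_left_cancel₀ (X_sub_X_ne_zero h) ?_
  have e := congrArg (rename (Equiv.swap i j)) (X_sub_X_mul_demazure i j f)
  simp only [map_mul, map_sub, rename_X, Equiv.swap_apply_left, Equiv.swap_apply_right,
    rename_swap_rename_swap] at e
  linear_combination -e - X_sub_X_mul_demazure i j f

lemma demazure_demazure (h : i ≠ j) (f : MvPolynomial σ ℚ) :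
    demazure i j (demazure i j f) = 0 :=
  demazure_eq_zero_of_rename_swap_eq h (rename_swap_demazure h f)

lemma demazure_neg (h : i ≠ j) (f : MvPolynomial σ ℚ) :
    demazure i j (-f) = -demazure i j f :=
  demazure_eq_of_mul_eq h (by rw [map_neg, mul_neg, X_sub_X_mul_demazure]; ring)

lemma X_sub_X_mul_X_sub_X_mul_demazure_demazure {a b c d : σ} (h : [a, b, c, d].Nodup)
    (f : MvPolynomial σ ℚ) :
    (X a - X b) * (X c - X d) * demazure a b (demazure c d f) =
      f - rename (Equiv.swap a b) f - rename (Equiv.swap c d) f +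
        rename (Equiv.swap a b) (rename (Equiv.swap c d) f) := by
  obtain ⟨⟨-, hac, had⟩, ⟨hbc, hbd⟩, -⟩ :
      (a ≠ b ∧ a ≠ c ∧ a ≠ d) ∧ (b ≠ c ∧ b ≠ d) ∧ c ≠ d := by
    simpa using h
  have e := congrArg (rename (Equiv.swap a b)) (X_sub_X_mul_demazure c d f)
  simp only [map_mul, map_sub, rename_X, Equiv.swap_apply_of_ne_of_ne hac.symm hbc.symm,
    Equiv.swap_apply_of_ne_of_ne had.symm hbd.symm] at e
  linear_combination (X c - X d) * X_sub_X_mul_demazure a b (demazure c d f) +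
    X_sub_X_mul_demazure c d f - e

lemma demazure_demazure_comm {a b c d : σ} (h : [a, b, c, d].Nodup) (f : MvPolynomial σ ℚ) :
    demazure a b (demazure c d f) = demazure c d (demazure a b f) := by
  have hcomm : Equiv.swap a b * Equiv.swap c d = Equiv.swap c d * Equiv.swap a b :=
    (Equiv.Perm.disjoint_swap_swap h).commute.eq
  obtain ⟨⟨hab, -⟩, -, hcd⟩ : (a ≠ b ∧ _) ∧ _ ∧ c ≠ d := by simpa using h
  refine mul_left_cancel₀ (mul_ne_zero (X_sub_X_ne_zero hab) (X_sub_X_ne_zero hcd)) ?_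
  rw [X_sub_X_mul_X_sub_X_mul_demazure_demazure h, mul_comm (X a - X b),
    X_sub_X_mul_X_sub_X_mul_demazure_demazure
      (h.perm (List.perm_append_comm (l₁ := [a, b]) (l₂ := [c, d]))),
    ← rename_perm_mul, ← rename_perm_mul, hcomm]
  ring

lemma X_sub_X_mul_demazure_demazure_demazure {a b c : σ} (h : [a, b, c].Nodup)
    (f : MvPolynomial σ ℚ) :
    (X a - X b) * (X a - X c) * (X b - X c) *
        demazure a b (demazure b c (demazure a b f)) =
      f - rename (Equiv.swap a b) f - rename (Equiv.swap b c) f +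
        rename (Equiv.swap b c) (rename (Equiv.swap a b) f) +
        rename (Equiv.swap a b) (rename (Equiv.swap b c) f) -
        rename (Equiv.swap a b) (rename (Equiv.swap b c) (rename (Equiv.swap a b) f)) := by
  obtain ⟨⟨hab, hac⟩, hbc⟩ : (a ≠ b ∧ a ≠ c) ∧ b ≠ c := by simpa using h
  set g₁ := demazure a b f
  set g₂ := demazure b c g₁
  have hsg₂ := congrArg (rename (Equiv.swap a b)) (X_sub_X_mul_demazure b c g₁)
  have htg₁ := congrArg (rename (Equiv.swap b c)) (X_sub_X_mul_demazure a b f)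
  have hstg₁ := congrArg (rename (Equiv.swap a b)) htg₁
  simp only [map_mul, map_sub, rename_X, Equiv.swap_apply_left, Equiv.swap_apply_right,
    Equiv.swap_apply_of_ne_of_ne hab hac, Equiv.swap_apply_of_ne_of_ne hac.symm hbc.symm,
    g₁, rename_swap_demazure hab] at hsg₂ htg₁ hstg₁
  linear_combination (X a - X c) * (X b - X c) * X_sub_X_mul_demazure a b g₂ +
    (X a - X c) * X_sub_X_mul_demazure b c g₁ - (X b - X c) * hsg₂ +
    X_sub_X_mul_demazure a b f - htg₁ + hstg₁

lemma demazure_braid {a b c : σ} (h : [a, b, c].Nodup) (f : MvPolynomial σ ℚ) :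
    demazure a b (demazure b c (demazure a b f)) =
      demazure b c (demazure a b (demazure b c f)) := by
  obtain ⟨⟨hab, hac⟩, hbc⟩ : (a ≠ b ∧ a ≠ c) ∧ b ≠ c := by simpa using h
  -- the right-hand side is, up to sign, the left-hand side for `(c, b, a)`
  have hrev : demazure b c (demazure a b (demazure b c f)) =
      -demazure c b (demazure b a (demazure c b f)) := by
    simp only [demazure_antisymm hbc, demazure_antisymm hab, demazure_neg hab, neg_neg]
  have hswap : rename (Equiv.swap a b) (rename (Equiv.swap b c) (rename (Equiv.swap a b) f)) =
      rename (Equiv.swap b c) (rename (Equiv.swap a b) (rename (Equiv.swap b c) f)) := by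
    simp only [← rename_perm_mul, ← mul_assoc]
    rw [Equiv.swap_mul_swap_mul_swap hab hac, Equiv.swap_comm a b, Equiv.swap_comm b c,
      Equiv.swap_mul_swap_mul_swap hbc.symm hac.symm, Equiv.swap_comm]
  have hcba := X_sub_X_mul_demazure_demazure_demazure
    (show [c, b, a].Nodup from List.nodup_reverse.2 h) f
  rw [Equiv.swap_comm c b, Equiv.swap_comm b a] at hcba
  refine mul_left_cancel₀ (mul_ne_zero (mul_ne_zero (X_sub_X_ne_zero hab) (X_sub_X_ne_zero hac))
    (X_sub_X_ne_zero hbc)) ?_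
  rw [X_sub_X_mul_demazure_demazure_demazure h, hrev, hswap]
  linear_combination -hcba

end Demazure

section AdjSwap

variable {n : ℕ}

lemma adjSwap_of_lt {i : ℕ} (hi : i + 1 < n) :
    adjSwap n i = Equiv.swap ⟨i, Nat.lt_of_succ_lt hi⟩ ⟨i + 1, hi⟩ := dif_pos hi

lemma adjSwap_of_not_lt {i : ℕ} (hi : ¬i + 1 < n) : adjSwap n i = 1 := dif_neg hi

lemma adjSwap_mul_self (i : ℕ) : adjSwap n i * adjSwap n i = 1 := by
  by_cases hi : i + 1 < n
  · rw [adjSwap_of_lt hi, Equiv.swap_mul_self]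
  · rw [adjSwap_of_not_lt hi, one_mul]

lemma adjSwap_mul_adjSwap_mul (i : ℕ) (w : Equiv.Perm (Fin n)) :
    adjSwap n i * (adjSwap n i * w) = w := by
  rw [← mul_assoc, adjSwap_mul_self, one_mul]

lemma adjSwap_inv (i : ℕ) : (adjSwap n i)⁻¹ = adjSwap n i :=
  inv_eq_of_mul_eq_one_right (adjSwap_mul_self i)

lemma adjSwap_apply_left {i : ℕ} (hi : i + 1 < n) :
    adjSwap n i ⟨i, Nat.lt_of_succ_lt hi⟩ = ⟨i + 1, hi⟩ := by
  rw [adjSwap_of_lt hi, Equiv.swap_apply_left]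

lemma adjSwap_apply_right {i : ℕ} (hi : i + 1 < n) :
    adjSwap n i ⟨i + 1, hi⟩ = ⟨i, Nat.lt_of_succ_lt hi⟩ := by
  rw [adjSwap_of_lt hi, Equiv.swap_apply_right]

lemma adjSwap_apply_of_ne {i k : ℕ} (hi : i + 1 < n) (hk : k < n) (hki : k ≠ i)
    (hki' : k ≠ i + 1) : adjSwap n i ⟨k, hk⟩ = ⟨k, hk⟩ := by
  rw [adjSwap_of_lt hi]
  exact Equiv.swap_apply_of_ne_of_ne (by simpa [Fin.ext_iff]) (by simpa [Fin.ext_iff])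

lemma adjSwap_lt_adjSwap_iff {i : ℕ} (hi : i + 1 < n) (x y : Fin n) :
    adjSwap n i x < adjSwap n i y ↔
      (x = ⟨i + 1, hi⟩ ∧ y = ⟨i, Nat.lt_of_succ_lt hi⟩) ∨
        (x < y ∧ ¬(x = ⟨i, Nat.lt_of_succ_lt hi⟩ ∧ y = ⟨i + 1, hi⟩)) := by
  rw [adjSwap_of_lt hi]
  simp only [Equiv.swap_apply_def]
  split_ifs <;> simp only [Fin.ext_iff, Fin.lt_def] at * <;> omega

lemma adjSwap_mul_comm {i j : ℕ} (hij : i + 1 < j ∨ j + 1 < i) :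
    adjSwap n i * adjSwap n j = adjSwap n j * adjSwap n i := by
  by_cases hi : i + 1 < n
  · by_cases hj : j + 1 < n
    · rw [adjSwap_of_lt hi, adjSwap_of_lt hj]
      exact (Equiv.Perm.disjoint_swap_swap (by simp [Fin.ext_iff]; omega)).commute.eq
    · simp [adjSwap_of_not_lt hj]
  · simp [adjSwap_of_not_lt hi]

lemma adjSwap_braid {i j : ℕ} (hi : i + 1 < n) (hj : j + 1 < n) (hij : i + 1 = j ∨ j + 1 = i) :
    adjSwap n i * adjSwap n j * adjSwap n i = adjSwap n j * adjSwap n i * adjSwap n j := by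
  wlog hij' : i + 1 = j generalizing i j
  · exact (this hj hi hij.symm (hij.resolve_left hij')).symm
  subst hij'
  rw [adjSwap_of_lt hi, adjSwap_of_lt hj]
  set a : Fin n := ⟨i, Nat.lt_of_succ_lt hi⟩
  set b : Fin n := ⟨i + 1, hi⟩
  set c : Fin n := ⟨i + 1 + 1, hj⟩
  have hab : a ≠ b := by simp [a, b]
  have hac : a ≠ c := by simp [a, c]; omega
  have hbc : b ≠ c := by simp [b, c]
  calc Equiv.swap a b * Equiv.swap b c * Equiv.swap a b
      = Equiv.swap b a * Equiv.swap c b * Equiv.swap b a := by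
        rw [Equiv.swap_comm a b, Equiv.swap_comm b c]
    _ = Equiv.swap a c := Equiv.swap_mul_swap_mul_swap hbc.symm hac.symm
    _ = Equiv.swap b c * Equiv.swap a b * Equiv.swap b c := by
        rw [Equiv.swap_mul_swap_mul_swap hab hac, Equiv.swap_comm]

end AdjSwap

section Length

variable {n : ℕ}

lemma permLen_one : permLen (1 : Equiv.Perm (Fin n)) = 0 := by
  rw [permLen, Finset.card_eq_zero, Finset.filter_eq_empty_iff]
  exact fun p _ ⟨h₁, h₂⟩ => lt_asymm h₁ h₂

lemma permLen_adjSwap_mul_of_lt {i : ℕ} (hi : i + 1 < n) {w : Equiv.Perm (Fin n)}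
    (h : w⁻¹ ⟨i, Nat.lt_of_succ_lt hi⟩ < w⁻¹ ⟨i + 1, hi⟩) :
    permLen (adjSwap n i * w) = permLen w + 1 := by
  set a : Fin n := ⟨i, Nat.lt_of_succ_lt hi⟩
  set b : Fin n := ⟨i + 1, hi⟩
  have hab : ∀ p q, w p = a → w q = b → p < q := by
    intro p q hp hq
    simpa [← hp, ← hq] using h
  have hnot : (w⁻¹ a, w⁻¹ b) ∉
      Finset.univ.filter (fun p : Fin n × Fin n => p.1 < p.2 ∧ w p.2 < w p.1) := by
    simp [a, b]
  rw [permLen, permLen, ← Finset.card_insert_of_notMem hnot]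
  congr 1
  ext ⟨p, q⟩
  simp only [Finset.mem_insert, Finset.mem_filter, Finset.mem_univ, true_and, Prod.mk.injEq,
    Equiv.Perm.mul_apply, adjSwap_lt_adjSwap_iff hi, Equiv.Perm.eq_inv_iff_eq]
  constructor
  · rintro ⟨hpq, ⟨hqb, hpa⟩ | ⟨hlt, -⟩⟩
    · exact Or.inl ⟨hpa, hqb⟩
    · exact Or.inr ⟨hpq, hlt⟩
  · rintro (⟨hpa, hqb⟩ | ⟨hpq, hlt⟩)
    · exact ⟨hab p q hpa hqb, Or.inl ⟨hqb, hpa⟩⟩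
    · exact ⟨hpq, Or.inr ⟨hlt, fun ⟨hqa, hpb⟩ => lt_asymm hpq (hab q p hqa hpb)⟩⟩

lemma adjSwap_mul_inv_apply (i : ℕ) (w : Equiv.Perm (Fin n)) (x : Fin n) :
    (adjSwap n i * w)⁻¹ x = w⁻¹ (adjSwap n i x) := by
  rw [mul_inv_rev, adjSwap_inv, Equiv.Perm.mul_apply]

lemma permLen_adjSwap_mul_of_gt {i : ℕ} (hi : i + 1 < n) {w : Equiv.Perm (Fin n)}
    (h : w⁻¹ ⟨i + 1, hi⟩ < w⁻¹ ⟨i, Nat.lt_of_succ_lt hi⟩) :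
    permLen w = permLen (adjSwap n i * w) + 1 := by
  have h' := permLen_adjSwap_mul_of_lt hi (w := adjSwap n i * w)
    (by rwa [adjSwap_mul_inv_apply, adjSwap_mul_inv_apply, adjSwap_apply_left,
      adjSwap_apply_right])
  rwa [adjSwap_mul_adjSwap_mul] at h'

lemma inv_apply_ne_inv_apply_succ {i : ℕ} (hi : i + 1 < n) (w : Equiv.Perm (Fin n)) :
    w⁻¹ ⟨i, Nat.lt_of_succ_lt hi⟩ ≠ w⁻¹ ⟨i + 1, hi⟩ :=
  w⁻¹.injective.ne (by simp)

def IsLeftDescent (w : Equiv.Perm (Fin n)) (i : ℕ) : Prop :=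
  permLen (adjSwap n i * w) < permLen w

lemma isLeftDescent_iff_inv_lt {i : ℕ} (hi : i + 1 < n) {w : Equiv.Perm (Fin n)} :
    IsLeftDescent w i ↔ w⁻¹ ⟨i + 1, hi⟩ < w⁻¹ ⟨i, Nat.lt_of_succ_lt hi⟩ := by
  rcases lt_or_gt_of_ne (inv_apply_ne_inv_apply_succ hi w) with h | h
  · simp only [IsLeftDescent, permLen_adjSwap_mul_of_lt hi h, lt_asymm h, iff_false]
    omega
  · simp only [IsLeftDescent, h, iff_true]
    linarith [permLen_adjSwap_mul_of_gt hi h]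

lemma permLen_adjSwap_mul_of_not_isLeftDescent {i : ℕ} (hi : i + 1 < n)
    {w : Equiv.Perm (Fin n)} (h : ¬IsLeftDescent w i) :
    permLen (adjSwap n i * w) = permLen w + 1 := by
  rw [isLeftDescent_iff_inv_lt hi, not_lt] at h
  exact permLen_adjSwap_mul_of_lt hi (h.lt_of_ne (inv_apply_ne_inv_apply_succ hi w))

lemma permLen_adjSwap_mul_le (i : ℕ) (w : Equiv.Perm (Fin n)) :
    permLen (adjSwap n i * w) ≤ permLen w + 1 := by
  by_cases hi : i + 1 < n
  · by_cases hd : IsLeftDescent w i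
    · exact (Nat.lt_succ_of_lt hd).le
    · exact (permLen_adjSwap_mul_of_not_isLeftDescent hi hd).le
  · rw [adjSwap_of_not_lt hi, one_mul]
    exact Nat.le_succ _

lemma IsLeftDescent.permLen_adjSwap_mul_add_one {i : ℕ} {w : Equiv.Perm (Fin n)}
    (h : IsLeftDescent w i) : permLen (adjSwap n i * w) + 1 = permLen w := by
  have := permLen_adjSwap_mul_le i (adjSwap n i * w)
  rw [adjSwap_mul_adjSwap_mul] at this
  exact le_antisymm h this

lemma exists_isLeftDescent_of_ne_one {w : Equiv.Perm (Fin n)} (hw : w ≠ 1) :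
    ∃ i, i + 1 < n ∧ IsLeftDescent w i := by
  by_contra! hasc
  have hmono : StrictMono ⇑w⁻¹ := by
    rcases n with _ | n
    · exact fun x => x.elim0
    refine Fin.strictMono_iff_lt_succ.2 fun j => ?_
    have hj : j.val + 1 < n + 1 := by omega
    refine (lt_or_gt_of_ne (inv_apply_ne_inv_apply_succ hj w)).resolve_right fun h => ?_
    exact hasc j hj ((isLeftDescent_iff_inv_lt hj).2 h)
  exact hw (inv_eq_one.1 (Equiv.ext fun x => congrFun hmono.eq_id x))

lemma IsLeftDescent.adjSwap_mul_of_far {i j : ℕ} (hi : i + 1 < n) (hj : j + 1 < n)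
    (hij : i + 1 < j ∨ j + 1 < i) {w : Equiv.Perm (Fin n)} (h : IsLeftDescent w i) :
    IsLeftDescent (adjSwap n j * w) i := by
  rw [isLeftDescent_iff_inv_lt hi] at h ⊢
  rwa [adjSwap_mul_inv_apply, adjSwap_mul_inv_apply,
    adjSwap_apply_of_ne hj _ (by omega) (by omega), adjSwap_apply_of_ne hj _ (by omega) (by omega)]

lemma IsLeftDescent.adjSwap_mul_of_adjacent {i j : ℕ} (hi : i + 1 < n) (hj : j + 1 < n)
    (hij : i + 1 = j ∨ j + 1 = i) {w : Equiv.Perm (Fin n)} (h : IsLeftDescent w i)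
    (h' : IsLeftDescent w j) :
    IsLeftDescent (adjSwap n j * w) i ∧ IsLeftDescent (adjSwap n i * (adjSwap n j * w)) j := by
  rw [isLeftDescent_iff_inv_lt hi] at h ⊢
  rw [isLeftDescent_iff_inv_lt hj] at h' ⊢
  simp only [adjSwap_mul_inv_apply]
  rcases hij with rfl | rfl
  · simp (disch := omega) only [adjSwap_apply_left, adjSwap_apply_right, adjSwap_apply_of_ne]
    exact ⟨h'.trans h, h⟩
  · simp (disch := omega) only [adjSwap_apply_left, adjSwap_apply_right, adjSwap_apply_of_ne]
    exact ⟨h.trans h', h⟩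

end Length

section ReducedWord

variable {n : ℕ}

lemma permLen_prod_le_length (l : List ℕ) : permLen (l.map (adjSwap n)).prod ≤ l.length := by
  induction l with
  | nil => simp [permLen_one]
  | cons i l ih =>
    simp only [List.map_cons, List.prod_cons, List.length_cons]
    linarith [permLen_adjSwap_mul_le i (l.map (adjSwap n)).prod]

lemma IsReducedWord.cons {w : Equiv.Perm (Fin n)} {i : ℕ} {l : List ℕ} (hi : i + 1 < n)
    (hd : IsLeftDescent w i) (hl : IsReducedWord n (adjSwap n i * w) l) :
    IsReducedWord n w (i :: l) := by
  obtain ⟨hlet, hprod, hlen⟩ := hl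
  refine ⟨List.forall_mem_cons.2 ⟨hi, hlet⟩, ?_, ?_⟩
  · rw [List.map_cons, List.prod_cons, hprod, adjSwap_mul_adjSwap_mul]
  · rw [List.length_cons, hlen, hd.permLen_adjSwap_mul_add_one]

lemma IsReducedWord.of_cons {w : Equiv.Perm (Fin n)} {i : ℕ} {l : List ℕ}
    (hl : IsReducedWord n w (i :: l)) :
    i + 1 < n ∧ IsLeftDescent w i ∧ IsReducedWord n (adjSwap n i * w) l := by
  obtain ⟨hlet, hprod, hlen⟩ := hl
  rw [List.forall_mem_cons] at hlet
  rw [List.map_cons, List.prod_cons] at hprod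
  have hprod' : (l.map (adjSwap n)).prod = adjSwap n i * w := by
    rw [← hprod, adjSwap_mul_adjSwap_mul]
  have hle := permLen_prod_le_length (n := n) l
  have hge := permLen_adjSwap_mul_le i (adjSwap n i * w)
  rw [hprod'] at hle
  rw [adjSwap_mul_adjSwap_mul] at hge
  rw [List.length_cons] at hlen
  exact ⟨hlet.1, by unfold IsLeftDescent; omega, hlet.2, hprod', by omega⟩

lemma exists_isReducedWord (w : Equiv.Perm (Fin n)) : ∃ l, IsReducedWord n w l := by
  induction hw : permLen w using Nat.strong_induction_on generalizing w with
  | _ r ih =>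
  by_cases h1 : w = 1
  · subst h1
    exact ⟨[], by simp, rfl, permLen_one.symm⟩
  obtain ⟨i, hi, hd⟩ := exists_isLeftDescent_of_ne_one h1
  obtain ⟨l, hl⟩ := ih _ (hw ▸ hd) (adjSwap n i * w) rfl
  exact ⟨i :: l, hl.cons hi hd⟩

end ReducedWord

section WordProperty

variable {n : ℕ} {M : Type*} [Monoid M]

def SatisfiesBraidRelations (n : ℕ) (T : ℕ → M) : Prop :=
  (∀ i j, i + 1 < j → j + 1 < n → T i * T j = T j * T i) ∧
    ∀ i, i + 2 < n → T i * T (i + 1) * T i = T (i + 1) * T i * T (i + 1)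

namespace SatisfiesBraidRelations

variable {T : ℕ → M} {i j : ℕ}

lemma comm (hT : SatisfiesBraidRelations n T) (hij : i + 1 < j ∨ j + 1 < i) (hi : i + 1 < n)
    (hj : j + 1 < n) : T i * T j = T j * T i := by
  rcases hij with h | h
  exacts [hT.1 i j h hj, (hT.1 j i h hi).symm]

lemma braid (hT : SatisfiesBraidRelations n T) (hij : i + 1 = j ∨ j + 1 = i) (hi : i + 1 < n)
    (hj : j + 1 < n) : T i * T j * T i = T j * T i * T j := by
  rcases hij with rfl | rfl
  exacts [hT.2 i hj, (hT.2 j hi).symm]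

end SatisfiesBraidRelations

lemma prod_map_cons_eq_of_isReducedWord {T : ℕ → M} (hT : SatisfiesBraidRelations n T)
    {w : Equiv.Perm (Fin n)}
    (ih : ∀ v, permLen v < permLen w → ∀ {l l' : List ℕ}, IsReducedWord n v l →
      IsReducedWord n v l' → (l.map T).prod = (l'.map T).prod)
    {i j : ℕ} {l m : List ℕ} (hl : IsReducedWord n w (j :: l))
    (hm : IsReducedWord n w (i :: m)) : T j * (l.map T).prod = T i * (m.map T).prod := by
  have step : ∀ v, permLen v < permLen w → ∀ {k}, k + 1 < n → IsLeftDescent v k →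
      ∀ {p q}, IsReducedWord n v p → IsReducedWord n (adjSwap n k * v) q →
        (p.map T).prod = T k * (q.map T).prod :=
    fun _ hv _ hk hd _ _ hp hq => ih _ hv hp (hq.cons hk hd)
  obtain ⟨hj, hdj, hl⟩ := hl.of_cons
  obtain ⟨hi, hdi, hm⟩ := hm.of_cons
  rcases (by omega : j = i ∨ (i + 1 < j ∨ j + 1 < i) ∨ (i + 1 = j ∨ j + 1 = i))
    with rfl | hfar | hadj
  · rw [ih _ hdj hl hm]
  · obtain ⟨k, hk⟩ := exists_isReducedWord (adjSwap n i * (adjSwap n j * w))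
    have hk' : IsReducedWord n (adjSwap n j * (adjSwap n i * w)) k := by
      rwa [← mul_assoc, adjSwap_mul_comm (by omega), mul_assoc]
    rw [step _ hdj hi (hdi.adjSwap_mul_of_far hi hj hfar) hl hk,
      step _ hdi hj (hdj.adjSwap_mul_of_far hj hi (by omega)) hm hk', ← mul_assoc, ← mul_assoc,
      hT.comm (by omega) hj hi]
  · obtain ⟨hdij, hdjij⟩ := hdi.adjSwap_mul_of_adjacent hi hj hadj hdj
    obtain ⟨hdji, hdiji⟩ := hdj.adjSwap_mul_of_adjacent hj hi hadj.symm hdi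
    obtain ⟨k, hk⟩ := exists_isReducedWord (adjSwap n j * (adjSwap n i * (adjSwap n j * w)))
    obtain ⟨k₁, hk₁⟩ := exists_isReducedWord (adjSwap n i * (adjSwap n j * w))
    obtain ⟨k₂, hk₂⟩ := exists_isReducedWord (adjSwap n j * (adjSwap n i * w))
    have hk' : IsReducedWord n (adjSwap n i * (adjSwap n j * (adjSwap n i * w))) k := by
      rwa [← mul_assoc, ← mul_assoc, adjSwap_braid hi hj hadj, mul_assoc, mul_assoc]
    rw [step _ hdj hi hdij hl hk₁, step _ (lt_trans hdij hdj) hj hdjij hk₁ hk,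
      step _ hdi hj hdji hm hk₂, step _ (lt_trans hdji hdi) hi hdiji hk₂ hk', ← mul_assoc,
      ← mul_assoc, ← mul_assoc, ← mul_assoc, hT.braid hadj.symm hj hi]

theorem prod_map_eq_of_isReducedWord {T : ℕ → M} (hT : SatisfiesBraidRelations n T)
    {w : Equiv.Perm (Fin n)} {l l' : List ℕ} (hl : IsReducedWord n w l)
    (hl' : IsReducedWord n w l') : (l.map T).prod = (l'.map T).prod := by
  induction hw : permLen w using Nat.strong_induction_on generalizing w l l' with
  | _ r ih =>
  subst hw
  have hlen : l.length = l'.length := hl.2.2.trans hl'.2.2.symm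
  rcases l with _ | ⟨j, l⟩ <;> rcases l' with _ | ⟨i, m⟩
  · rfl
  · simp at hlen
  · simp at hlen
  simpa only [List.map_cons, List.prod_cons] using
    prod_map_cons_eq_of_isReducedWord hT (fun v hv _ _ hp hq => ih _ hv hp hq rfl) hl hl'

end WordProperty

section DemazureWord

variable {n : ℕ}

lemma demAt_of_lt {i : ℕ} (hi : i + 1 < n) :
    demAt n i = demazure ⟨i, Nat.lt_of_succ_lt hi⟩ ⟨i + 1, hi⟩ := dif_pos hi

lemma demAt_zero (i : ℕ) : demAt n i 0 = 0 := by
  by_cases hi : i + 1 < n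
  · rw [demAt_of_lt hi, demazure_zero (by simp)]
  · rw [demAt, dif_neg hi]

lemma demAt_demAt (i : ℕ) (f : MvPolynomial (Fin n) ℚ) : demAt n i (demAt n i f) = 0 := by
  by_cases hi : i + 1 < n
  · rw [demAt_of_lt hi, demazure_demazure (by simp)]
  · rw [demAt, dif_neg hi]

lemma demAt_comp_comm {i j : ℕ} (hij : i + 1 < j) (hj : j + 1 < n) :
    demAt n i ∘ demAt n j = demAt n j ∘ demAt n i := by
  rw [demAt_of_lt (show i + 1 < n by omega), demAt_of_lt hj]
  exact funext <| demazure_demazure_comm (by simp [Fin.ext_iff]; omega)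

lemma demAt_braid {i : ℕ} (hi : i + 2 < n) :
    demAt n i ∘ demAt n (i + 1) ∘ demAt n i =
      demAt n (i + 1) ∘ demAt n i ∘ demAt n (i + 1) := by
  rw [demAt_of_lt (show i + 1 < n by omega), demAt_of_lt hi]
  exact funext <| demazure_braid (by simp [Fin.ext_iff]; omega)

lemma demWord_eq_prod (l : List ℕ) :
    demWord n l = (l.map (β := Function.End (MvPolynomial (Fin n) ℚ)) (demAt n)).prod := by
  induction l with
  | nil => rfl
  | cons i l ih => exact congrArg (demAt n i ∘ ·) ih

lemma demWord_append (l l' : List ℕ) : demWord n (l ++ l') = demWord n l ∘ demWord n l' := by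
  induction l with
  | nil => rfl
  | cons i l ih => exact congrArg (demAt n i ∘ ·) ih

lemma demWord_eq_of_isReducedWord {w : Equiv.Perm (Fin n)} {l l' : List ℕ}
    (hl : IsReducedWord n w l) (hl' : IsReducedWord n w l') : demWord n l = demWord n l' := by
  rw [demWord_eq_prod, demWord_eq_prod]
  exact prod_map_eq_of_isReducedWord (M := Function.End _) (T := demAt n)
    ⟨fun _ _ hij hj => demAt_comp_comm hij hj, fun _ hi => demAt_braid hi⟩ hl hl'

lemma demazureOf_eq_demWord {w : Equiv.Perm (Fin n)} {l : List ℕ} (hl : IsReducedWord n w l) :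
    demazureOf n w = demWord n l := by
  rw [demazureOf, dif_pos ⟨l, hl⟩]
  exact demWord_eq_of_isReducedWord (Exists.choose_spec _) hl

lemma demWord_eq_zero_of_permLen_lt {l : List ℕ} (hlet : ∀ i ∈ l, i + 1 < n)
    (hlen : permLen (l.map (adjSwap n)).prod < l.length) : demWord n l = fun _ => 0 := by
  induction l with
  | nil => simp at hlen
  | cons i m ih =>
    rw [List.forall_mem_cons] at hlet
    rw [List.map_cons, List.prod_cons, List.length_cons] at hlen
    funext f
    change demAt n i (demWord n m f) = 0
    by_cases hm : permLen (m.map (adjSwap n)).prod < m.length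
    · rw [ih hlet.2 hm, demAt_zero]
    have hv : IsReducedWord n (m.map (adjSwap n)).prod m :=
      ⟨hlet.2, rfl, (le_antisymm (permLen_prod_le_length m) (not_lt.1 hm)).symm⟩
    have hd : IsLeftDescent (m.map (adjSwap n)).prod i := by
      by_contra hd
      have := permLen_adjSwap_mul_of_not_isLeftDescent hlet.1 hd
      omega
    obtain ⟨k, hk⟩ := exists_isReducedWord (adjSwap n i * (m.map (adjSwap n)).prod)
    rw [demWord_eq_of_isReducedWord hv (hk.cons hlet.1 hd)]
    exact demAt_demAt i _

end DemazureWord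

theorem demazure_comp_general (n : ℕ) (u v : Equiv.Perm (Fin n)) :
    (permLen (u * v) = permLen u + permLen v →
      demazureOf n u ∘ demazureOf n v = demazureOf n (u * v)) ∧
    (permLen (u * v) < permLen u + permLen v →
      demazureOf n u ∘ demazureOf n v = fun _ => 0) := by
  obtain ⟨l, hl⟩ := exists_isReducedWord u
  obtain ⟨l', hl'⟩ := exists_isReducedWord v
  have hlet : ∀ i ∈ l ++ l', i + 1 < n := List.forall_mem_append.2 ⟨hl.1, hl'.1⟩
  have hprod : ((l ++ l').map (adjSwap n)).prod = u * v := by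
    rw [List.map_append, List.prod_append, hl.2.1, hl'.2.1]
  have hlen : (l ++ l').length = permLen u + permLen v := by
    rw [List.length_append, hl.2.2, hl'.2.2]
  rw [demazureOf_eq_demWord hl, demazureOf_eq_demWord hl', ← demWord_append]
  refine ⟨fun h => (demazureOf_eq_demWord ⟨hlet, hprod, hlen.trans h.symm⟩).symm, fun h => ?_⟩
  exact demWord_eq_zero_of_permLen_lt hlet (by rwa [hprod, hlen])

/-- If `ℓ(uv) = ℓ(u) + ℓ(v)` then `∂_u ∘ ∂_v = ∂_{uv}`; if `ℓ(uv) < ℓ(u) + ℓ(v)` then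
`∂_u ∘ ∂_v = 0`. -/
theorem demazure_comp (n : ℕ) (hn : 1 ≤ n) (u v : Equiv.Perm (Fin n)) :
    (permLen (u * v) = permLen u + permLen v →
      demazureOf n u ∘ demazureOf n v = demazureOf n (u * v)) ∧
    (permLen (u * v) < permLen u + permLen v →
      demazureOf n u ∘ demazureOf n v = fun _ => 0) :=
  demazure_comp_general n u v
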